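/- If Z is Poisson distributed with mean β and, conditionally on Z, Y is gamma distributed with shape δ+Z and rate 1/c, then the Laplace transform of Y satisfies E[exp(-sY)] = (1+cs)^{-δ} · exp(-βcs/(1+cs)) for all s ≥ 0. -/

import Mathlib

/-!
Tilting the `Gamma(a, r)` density by `exp (-s y)` gives `(r / (r + s)) ^ a` times the
`Gamma(a, r + s)` density, so the `k`-th mixture component of `NcGa(δ, β, 1/c)` has Laplace
transform `q ^ (δ + k)` with `q = (1 + c s)⁻¹`. Averaging over `k ~ Poi(β)` gives
`q ^ δ * E[q ^ Z] = q ^ δ * exp (β (q - 1))` by the Poisson generating function.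
-/

open MeasureTheory ProbabilityTheory Real
open scoped NNReal ENNReal

/-- The noncentral gamma distribution `NcGa(δ, β, 1/c)`: a Poisson(β) mixture of
Gamma(δ + k, 1/c) distributions (shape-rate parametrization, rate `c⁻¹`). -/
noncomputable def ncGamma (δ : ℝ) (β : ℝ≥0) (c : ℝ) : Measure ℝ :=
  Measure.sum fun k : ℕ => poissonPMF β k • gammaMeasure (δ + k) c⁻¹

open scoped Nat

lemma exp_neg_mul_mul_gammaPDFReal {a r s : ℝ} (hr : 0 ≤ r) (hrs : 0 < r + s) (y : ℝ) :
    exp (-s * y) * gammaPDFReal a r y = (r / (r + s)) ^ a * gammaPDFReal a (r + s) y := by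
  unfold gammaPDFReal
  split_ifs
  · have hpow : (r / (r + s)) ^ a * (r + s) ^ a = r ^ a := by
      rw [← mul_rpow (by positivity) hrs.le, div_mul_cancel₀ _ hrs.ne']
    have hexp : exp (-s * y) * exp (-(r * y)) = exp (-((r + s) * y)) := by
      rw [← exp_add]; ring_nf
    rw [← hpow, ← hexp]
    ring
  · simp

lemma measurable_gammaPDF (a r : ℝ) : Measurable (gammaPDF a r) :=
  (measurable_gammaPDFReal a r).ennreal_ofReal

lemma lintegral_exp_neg_mul_gammaMeasure {a r s : ℝ} (ha : 0 < a) (hr : 0 ≤ r)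
    (hrs : 0 < r + s) :
    ∫⁻ y, ENNReal.ofReal (exp (-s * y)) ∂gammaMeasure a r
      = ENNReal.ofReal ((r / (r + s)) ^ a) := by
  have hdensity : ∀ y, gammaPDF a r y * ENNReal.ofReal (exp (-s * y))
      = ENNReal.ofReal ((r / (r + s)) ^ a) * gammaPDF a (r + s) y := by
    intro y
    rw [gammaPDF, gammaPDF, ← ENNReal.ofReal_mul', ← ENNReal.ofReal_mul (by positivity),
      mul_comm, exp_neg_mul_mul_gammaPDFReal hr hrs]
    positivity
  rw [gammaMeasure, lintegral_withDensity_eq_lintegral_mul _ (measurable_gammaPDF a r)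
    (by fun_prop)]
  simp only [Pi.mul_apply, hdensity]
  rw [lintegral_const_mul _ (measurable_gammaPDF a (r + s)), lintegral_gammaPDF_eq_one ha hrs,
    mul_one]

lemma hasSum_poisson_mul_pow (r : ℝ≥0) (t : ℝ) :
    HasSum (fun n : ℕ ↦ exp (-r) * r ^ n / n ! * t ^ n) (exp (r * (t - 1))) := by
  have hexp := (NormedSpace.expSeries_div_hasSum_exp ((r : ℝ) * t)).mul_left (exp (-r))
  rw [← exp_eq_exp_ℝ, ← exp_add] at hexp
  rw [show (r : ℝ) * (t - 1) = -r + r * t by ring]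
  refine hexp.congr_fun fun n ↦ ?_
  rw [mul_pow]
  ring

lemma lintegral_exp_neg_mul_ncGamma {δ : ℝ} (β : ℝ≥0) {c s : ℝ} (hδ : 0 < δ)
    (hc : 0 < c) (hs : 0 ≤ s) :
    ∫⁻ y, ENNReal.ofReal (exp (-s * y)) ∂ncGamma δ β c
      = ENNReal.ofReal ((1 + c * s)⁻¹ ^ δ * exp (β * ((1 + c * s)⁻¹ - 1))) := by
  have hq : c⁻¹ / (c⁻¹ + s) = (1 + c * s)⁻¹ := by field_simp
  set q := (1 + c * s)⁻¹
  have hgamma : ∀ k : ℕ, ∫⁻ y, ENNReal.ofReal (exp (-s * y)) ∂gammaMeasure (δ + k) c⁻¹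
      = ENNReal.ofReal (q ^ (δ + k)) := fun k ↦ by
    rw [lintegral_exp_neg_mul_gammaMeasure (by positivity) (by positivity) (by positivity), hq]
  have hterm : ∀ k : ℕ, poissonPMF β k * ENNReal.ofReal (q ^ (δ + k))
      = ENNReal.ofReal (q ^ δ * (exp (-β) * β ^ k / k ! * q ^ k)) := by
    intro k
    rw [show poissonPMF β k = ENNReal.ofReal (exp (-β) * β ^ k / k !) from rfl,
      ← ENNReal.ofReal_mul (by positivity), rpow_add (by positivity), rpow_natCast]
    ring_nf
  have hsum := (hasSum_poisson_mul_pow β q).mul_left (q ^ δ)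
  rw [ncGamma, lintegral_sum_measure]
  simp only [lintegral_smul_measure, hgamma, smul_eq_mul, hterm]
  rw [← ENNReal.ofReal_tsum_of_nonneg (fun k ↦ by positivity) hsum.summable, hsum.tsum_eq]

/-- Laplace transform of the noncentral gamma distribution:
`E[exp(-sY)] = (1+cs)^(-δ) * exp(-βcs/(1+cs))`. -/
theorem ncGamma_laplace (δ : ℝ) (β : ℝ≥0) (c s : ℝ)
    (hδ : 0 < δ) (hc : 0 < c) (hs : 0 ≤ s) :
    ∫ y, Real.exp (-s * y) ∂(ncGamma δ β c)
      = (1 + c * s) ^ (-δ) * Real.exp (-((β : ℝ) * c * s) / (1 + c * s)) := by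
  have hcs : 0 < 1 + c * s := by positivity
  rw [integral_eq_lintegral_of_nonneg_ae (ae_of_all _ fun y ↦ (exp_pos _).le)
      (by fun_prop), lintegral_exp_neg_mul_ncGamma β hδ hc hs,
    ENNReal.toReal_ofReal (by positivity), inv_rpow hcs.le, ← rpow_neg hcs.le]
  congr 2
  field_simp
  ring
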